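/- Let Ω ⊆ ℝ² be open, μ ≠ 0 and λ ∈ ℝ, let u : ℝ² → ℝ² be twice continuously differentiable on Ω, and let σ be a continuously differentiable 2×2 matrix field on Ω such that σ^r = μ·underline_curl(u) and curl(σ) = −λu on Ω. Define p := −(1/2)(σ:J). Then on Ω: −μ(Δu₁,Δu₂) + ∇p = λu and div(u) = 0; that is, the reduced stress–velocity system is equivalent to the Stokes eigenvalue system with the pressure recovered by p = −(1/2)(σ:J). -/

import Mathlib

/-- The matrix `J` with rows `(0, 1)` and `(-1, 0)`. -/
def J : Matrix (Fin 2) (Fin 2) ℝ := !![0, 1; -1, 0]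

/-- The Frobenius inner product `τ : σ = ∑ i j, τ i j * σ i j` of 2×2 real matrices. -/
def frob (τ σ : Matrix (Fin 2) (Fin 2) ℝ) : ℝ := ∑ i, ∑ j, τ i j * σ i j

/-- `τ^r := τ − (1/2)(τ:J)·J`. -/
noncomputable def taur (τ : Matrix (Fin 2) (Fin 2) ℝ) : Matrix (Fin 2) (Fin 2) ℝ :=
  τ - ((1 / 2) * frob τ J) • J

/-- Partial derivative `∂f/∂x_j` at `x` of a scalar field on `ℝ²`. -/
noncomputable def pd (f : (Fin 2 → ℝ) → ℝ) (x : Fin 2 → ℝ) (j : Fin 2) : ℝ :=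
  fderiv ℝ f x (Pi.single j 1)

/-- `underline_curl(u)`: the 2×2 matrix field whose `i`-th row is `(−∂uᵢ/∂x₂, ∂uᵢ/∂x₁)`. -/
noncomputable def ucurl (u : (Fin 2 → ℝ) → (Fin 2 → ℝ)) (x : Fin 2 → ℝ) :
    Matrix (Fin 2) (Fin 2) ℝ :=
  !![-pd (fun y => u y 0) x 1, pd (fun y => u y 0) x 0;
     -pd (fun y => u y 1) x 1, pd (fun y => u y 1) x 0]

/-- `curl(τ) := (∂τ₁₂/∂x₁ − ∂τ₁₁/∂x₂, ∂τ₂₂/∂x₁ − ∂τ₂₁/∂x₂)` of a 2×2 matrix field. -/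
noncomputable def mcurl (τ : (Fin 2 → ℝ) → Matrix (Fin 2) (Fin 2) ℝ) (x : Fin 2 → ℝ) :
    Fin 2 → ℝ :=
  ![pd (fun y => τ y 0 1) x 0 - pd (fun y => τ y 0 0) x 1,
    pd (fun y => τ y 1 1) x 0 - pd (fun y => τ y 1 0) x 1]

/-- `div(u) := ∂u₁/∂x₁ + ∂u₂/∂x₂`. -/
noncomputable def divg (u : (Fin 2 → ℝ) → (Fin 2 → ℝ)) (x : Fin 2 → ℝ) : ℝ :=
  pd (fun y => u y 0) x 0 + pd (fun y => u y 1) x 1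

/-- The Laplacian `Δf := ∂²f/∂x₁² + ∂²f/∂x₂²` of a scalar field on `ℝ²`. -/
noncomputable def lap (f : (Fin 2 → ℝ) → ℝ) (x : Fin 2 → ℝ) : ℝ :=
  pd (fun y => pd f y 0) x 0 + pd (fun y => pd f y 1) x 1

/-! Since `τ^r` differs from `τ` by a multiple of `J`, the constitutive law says `σ = μ·curl u − p·J`
near each point. As `curl (curl u) = Δu` and `curl (p·J) = ∇p`, the equation `curl σ = −λu` is then
exactly the momentum equation. Pairing the constitutive law with `J` gives
incompressibility, because `τ^r : J = 0` while `(curl u) : J = div u`. -/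

open Filter Topology

section PartialDerivatives

variable {f g : (Fin 2 → ℝ) → ℝ} {x : Fin 2 → ℝ}

lemma pd_congr (h : f =ᶠ[𝓝 x] g) (j : Fin 2) : pd f x j = pd g x j := by
  rw [pd, pd, h.fderiv_eq]

@[simp]
lemma pd_const (c : ℝ) (j : Fin 2) : pd (fun _ => c) x j = 0 := by
  simp [pd]

@[simp]
lemma pd_neg (f : (Fin 2 → ℝ) → ℝ) (j : Fin 2) : pd (fun y => -f y) x j = -pd f x j := by
  simp [pd, fderiv_fun_neg]

lemma pd_const_mul (c : ℝ) (f : (Fin 2 → ℝ) → ℝ) (j : Fin 2) :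
    pd (fun y => c * f y) x j = c * pd f x j := by
  change fderiv ℝ (c • f) x _ = _
  rw [fderiv_const_smul_field]
  rfl

lemma pd_sub (hf : DifferentiableAt ℝ f x) (hg : DifferentiableAt ℝ g x) (j : Fin 2) :
    pd (fun y => f y - g y) x j = pd f x j - pd g x j := by
  simp [pd, fderiv_fun_sub hf hg]

lemma differentiableAt_pd (hf : ContDiffAt ℝ 2 f x) (j : Fin 2) :
    DifferentiableAt ℝ (fun y => pd f y j) x :=
  ((hf.fderiv_right (by norm_num)).differentiableAt one_ne_zero).clm_apply
    (differentiableAt_const _)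

end PartialDerivatives

lemma frob_J (τ : Matrix (Fin 2) (Fin 2) ℝ) : frob τ J = τ 0 1 - τ 1 0 := by
  simp [frob, J, Fin.sum_univ_two]
  ring

lemma frob_smul_left (c : ℝ) (τ σ : Matrix (Fin 2) (Fin 2) ℝ) :
    frob (c • τ) σ = c * frob τ σ := by
  simp [frob, Fin.sum_univ_two]
  ring

lemma frob_taur_J (τ : Matrix (Fin 2) (Fin 2) ℝ) : frob (taur τ) J = 0 := by
  rw [taur, frob_J, frob_J]
  simp [J]
  ring

lemma frob_ucurl_J (u : (Fin 2 → ℝ) → (Fin 2 → ℝ)) (x : Fin 2 → ℝ) :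
    frob (ucurl u x) J = divg u x := by
  simp [frob_J, ucurl, divg]

lemma taur_sub_smul_J (τ : Matrix (Fin 2) (Fin 2) ℝ) :
    taur τ - (-(1 / 2) * frob τ J) • J = τ := by
  simp [taur, neg_mul, neg_smul]

section MatrixCurl

variable {x : Fin 2 → ℝ}

lemma mcurl_congr {τ τ' : (Fin 2 → ℝ) → Matrix (Fin 2) (Fin 2) ℝ} (h : τ =ᶠ[𝓝 x] τ') :
    mcurl τ x = mcurl τ' x := by
  have hij (i j : Fin 2) : (fun y => τ y i j) =ᶠ[𝓝 x] fun y => τ' y i j := h.fun_comp (· i j)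
  rw [mcurl, mcurl, pd_congr (hij 0 1), pd_congr (hij 0 0), pd_congr (hij 1 1), pd_congr (hij 1 0)]

lemma mcurl_sub {τ τ' : (Fin 2 → ℝ) → Matrix (Fin 2) (Fin 2) ℝ}
    (hτ : ∀ i j, DifferentiableAt ℝ (fun y => τ y i j) x)
    (hτ' : ∀ i j, DifferentiableAt ℝ (fun y => τ' y i j) x) :
    mcurl (fun y => τ y - τ' y) x = mcurl τ x - mcurl τ' x := by
  ext i
  fin_cases i <;> simp [mcurl, pd_sub (hτ _ _) (hτ' _ _)] <;> ring

lemma mcurl_smul (c : ℝ) (τ : (Fin 2 → ℝ) → Matrix (Fin 2) (Fin 2) ℝ) :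
    mcurl (fun y => c • τ y) x = c • mcurl τ x := by
  ext i
  fin_cases i <;> simp [mcurl, pd_const_mul] <;> ring

lemma mcurl_smul_J (p : (Fin 2 → ℝ) → ℝ) : mcurl (fun y => p y • J) x = fun i => pd p x i := by
  ext i
  fin_cases i <;> simp [mcurl, J]

lemma mcurl_ucurl (u : (Fin 2 → ℝ) → (Fin 2 → ℝ)) :
    mcurl (ucurl u) x = fun i => lap (fun y => u y i) x := by
  ext i
  fin_cases i <;> simp [mcurl, ucurl, lap]

lemma differentiableAt_ucurl {u : (Fin 2 → ℝ) → (Fin 2 → ℝ)} (hu : ContDiffAt ℝ 2 u x)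
    (i j : Fin 2) : DifferentiableAt ℝ (fun y => ucurl u y i j) x := by
  have hpd := fun k l => differentiableAt_pd (contDiffAt_pi.mp hu k) l
  fin_cases i <;> fin_cases j <;> simp [ucurl, hpd]

end MatrixCurl

section StressVelocity

variable {μ : ℝ} {u : (Fin 2 → ℝ) → (Fin 2 → ℝ)} {x : Fin 2 → ℝ}

lemma divg_eq_zero_of_taur_eq_smul_ucurl {τ : Matrix (Fin 2) (Fin 2) ℝ} (hμ : μ ≠ 0)
    (h : taur τ = μ • ucurl u x) : divg u x = 0 := by
  have hJ := congrArg (frob · J) h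
  simp only [frob_taur_J, frob_smul_left, frob_ucurl_J] at hJ
  exact (mul_eq_zero.mp hJ.symm).resolve_left hμ

lemma mcurl_eq_of_taur_eq_smul_ucurl {σ : (Fin 2 → ℝ) → Matrix (Fin 2) (Fin 2) ℝ}
    (hu : ContDiffAt ℝ 2 u x) (hσ : ∀ i j, DifferentiableAt ℝ (fun y => σ y i j) x)
    (h : ∀ᶠ y in 𝓝 x, taur (σ y) = μ • ucurl u y) :
    mcurl σ x = μ • (fun i => lap (fun y => u y i) x) -
      fun i => pd (fun y => -(1 / 2) * frob (σ y) J) x i := by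
  set p := fun y => -(1 / 2) * frob (σ y) J
  have hσ_eq : σ =ᶠ[𝓝 x] fun y => μ • ucurl u y - p y • J :=
    h.mono fun y hy => by simp only [← hy, p, taur_sub_smul_J]
  have hp : DifferentiableAt ℝ p x := by
    simp only [p, frob_J]
    exact ((hσ 0 1).sub (hσ 1 0)).const_mul _
  rw [mcurl_congr hσ_eq, mcurl_sub, mcurl_smul, mcurl_ucurl, mcurl_smul_J]
  · intro i j
    simpa using (differentiableAt_ucurl hu i j).const_mul μ
  · intro i j
    simpa using hp.mul_const (J i j)

end StressVelocity

/-- If `σ^r = μ·underline_curl(u)` and `curl(σ) = −λu` on an open set `Ω`, with `μ ≠ 0`,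
`u` of class `C²` and `σ` of class `C¹` on `Ω`, then `u` and the recovered pressure
`p := −(1/2)(σ:J)` solve the Stokes eigenvalue problem `−μΔu + ∇p = λu`, `div u = 0` on `Ω`. -/
theorem stress_velocity_to_stokes (Ω : Set (Fin 2 → ℝ)) (hΩ : IsOpen Ω) (μ lam : ℝ)
    (hμ : μ ≠ 0)
    (u : (Fin 2 → ℝ) → (Fin 2 → ℝ)) (hu : ContDiffOn ℝ 2 u Ω)
    (σ : (Fin 2 → ℝ) → Matrix (Fin 2) (Fin 2) ℝ)
    (hσreg : ∀ i j, ContDiffOn ℝ 1 (fun y => σ y i j) Ω)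
    (hσr : ∀ x ∈ Ω, taur (σ x) = μ • ucurl u x)
    (hcurl : ∀ x ∈ Ω, mcurl σ x = fun i => -lam * u x i) :
    ∀ x ∈ Ω,
      ((fun i => -μ * lap (fun y => u y i) x +
          pd (fun y => -(1 / 2) * frob (σ y) J) x i) = fun i => lam * u x i) ∧
      divg u x = 0 := by
  intro x hx
  have hΩx : Ω ∈ 𝓝 x := hΩ.mem_nhds hx
  have hσx (i j : Fin 2) : DifferentiableAt ℝ (fun y => σ y i j) x :=
    ((hσreg i j).contDiffAt hΩx).differentiableAt one_ne_zero
  have hmomentum := mcurl_eq_of_taur_eq_smul_ucurl (hu.contDiffAt hΩx) hσx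
    (eventually_of_mem hΩx hσr)
  rw [hcurl x hx] at hmomentum
  refine ⟨funext fun i => ?_, divg_eq_zero_of_taur_eq_smul_ucurl hμ (hσr x hx)⟩
  have hi := congrFun hmomentum i
  simp only [Pi.sub_apply, Pi.smul_apply, smul_eq_mul] at hi
  linarith
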